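/- arXiv:1212.0052 — 2 statements merged into one kernel-verified Lean document; each statement's English description precedes it below -/
import Mathlib

section
/- The morphism $\psi$ on $\Sigma_6 = \{0,1,2,3,4,5\}$ defined by $\psi(0)=0435$, $\psi(1)=2341$, $\psi(2)=3542$, $\psi(3)=3540$, $\psi(4)=4134$, $\psi(5)=4105$ is strongly synchronizing: it is synchronizing, and for all letters $a,b,c \in \Sigma_6$, if $\psi(c) = xy$ where $x$ is a prefix of $\psi(a)$ and $y$ is a suffix of $\psi(b)$, then $c = a$ or $c = b$. -/
/-- `h` is a synchronizing morphism. -/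
def Synchronizing {α β : Type*} (h : α → List β) : Prop :=
  ∀ (a b c : α) (r s : List β), h a ++ h b = r ++ h c ++ s →
    (r = [] ∧ a = c) ∨ (s = [] ∧ b = c)

/-- `h` is a strongly synchronizing morphism. -/
def StronglySynchronizing {α β : Type*} (h : α → List β) : Prop :=
  Synchronizing h ∧ ∀ (a b c : α) (x y : List β), h c = x ++ y →
    x <+: h a → y <:+ h b → c = a ∨ c = b

/-- The 4-uniform morphism ψ on Σ₆. -/
def psi : Fin 6 → List (Fin 6) :=
  ![[0, 4, 3, 5], [2, 3, 4, 1], [3, 5, 4, 2], [3, 5, 4, 0], [4, 1, 3, 4], [4, 1, 0, 5]]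

/-!
For an `n`-uniform morphism an occurrence of `h c` inside `h a ++ h b` is determined by its
starting position `k ≤ n`, and a factorisation `h c = x ++ y` by the length `k ≤ n` of `x`.
Both conditions thus reduce to finitely many checks, which for `ψ` are done by `decide`.
-/

section Uniform

variable {α β : Type*} {h : α → List β} {n : ℕ}

theorem synchronizing_of_uniform (hlen : ∀ a, (h a).length = n)
    (H : ∀ a b c, ∀ k ≤ n, ((h a ++ h b).drop k).take n = h c →
      (k = 0 ∧ a = c) ∨ (k = n ∧ b = c)) :
    Synchronizing h := by
  intro a b c r s hrs
  have hlen_rs : r.length + s.length = n := by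
    have := congrArg List.length hrs
    simp only [List.length_append, hlen] at this
    omega
  have hocc : ((h a ++ h b).drop r.length).take n = h c := by
    rw [hrs, List.append_assoc, List.drop_left, List.take_append_of_le_length (hlen c).ge,
      ← hlen c, List.take_length]
  rcases H a b c r.length (by omega) hocc with ⟨hr, hac⟩ | ⟨hr, hbc⟩
  · exact Or.inl ⟨List.eq_nil_of_length_eq_zero hr, hac⟩
  · exact Or.inr ⟨List.eq_nil_of_length_eq_zero (by omega), hbc⟩

theorem stronglySynchronizing_of_uniform (hlen : ∀ a, (h a).length = n)
    (hsync : Synchronizing h)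
    (H : ∀ a b c, ∀ k ≤ n, (h c).take k <+: h a → (h c).drop k <:+ h b → c = a ∨ c = b) :
    StronglySynchronizing h := by
  refine ⟨hsync, fun a b c x y hxy hx hy => ?_⟩
  have hk : x.length ≤ n := by
    rw [← hlen c, hxy, List.length_append]
    omega
  rw [show x = (h c).take x.length by rw [hxy, List.take_left]] at hx
  rw [show y = (h c).drop x.length by rw [hxy, List.drop_left]] at hy
  exact H a b c x.length hk hx hy

end Uniform

theorem psi_length (a : Fin 6) : (psi a).length = 4 := by
  fin_cases a <;> rfl

theorem psi_synchronizing : Synchronizing psi :=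
  synchronizing_of_uniform psi_length (by decide)

/-- ψ is strongly synchronizing. -/
theorem psi_strongly_synchronizing : StronglySynchronizing psi :=
  stronglySynchronizing_of_uniform psi_length psi_synchronizing (by decide)
end

section
/- Let $h:\Gamma_1^* \to \Gamma^*$ be a strongly synchronizing $q$-uniform morphism and let $w$ be an infinite word over $\Gamma_1$ that is squarefree and circularly cubefree. If $x_1 t x_2$ is a factor of $h(w)$ and $x_2 x_1$ is a $\beta$-power for some $\beta > 13/4$, then $|x_2 x_1| < 22q$. -/
/-- `u` occurs as a factor of the infinite word `w` (at some position `i`). -/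
def FactorOf {α : Type*} (u : List α) (w : ℕ → α) : Prop :=
  ∃ i : ℕ, u = (List.range u.length).map (fun k => w (i + k))

/-- `p` is a period of the finite word `v`. -/
def HasPeriod {α : Type*} (v : List α) (p : ℕ) : Prop :=
  0 < p ∧ p ≤ v.length ∧ ∀ i : ℕ, i + p < v.length → v[i + p]? = v[i]?

/-- The image of the infinite word `w` under the `q`-uniform morphism `h`, as an
infinite word. -/
def morphImage {α β : Type*} [Inhabited β] (h : α → List β) (q : ℕ) (w : ℕ → α) :
    ℕ → β := fun n => (h (w (n / q))).getD (n % q) default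

/-!
Write `y = h(w)`. The longer of `x₁`, `x₂` has period `p` and length at least `p + 2q`, so it
contains an aligned image block whose translate by `p` is again an image block; synchronization
forces `q ∣ p`. Squarefreeness of `w` then bounds `|x₁|` and `|x₂|` by about `2p`, and translating
a block of `x₂` by `p` into `x₁` shows that `x₁` starts in the same phase modulo `q` in which `x₂`
ends. Hence `x₂x₁`, up to a border shorter than `q`, is a concatenation of `q`-blocks, all images
of letters of `w` except one hybrid block at the junction. Periodicity makes the hybrid block an
image block, and strong synchronization identifies it with one of its two neighbours. Decoding
gives a circular factor of `w` with period `p / q` and length at least `3p / q`: a circular cube.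

The circular word `x₂x₁` is modelled as `splice (y (c + ·)) (y (d + ·)) |x₂|`, the infinite word
that reads `y` from `c` for `|x₂|` letters and then reads `y` from `d`.
-/

section Words

variable {γ : Type*}

def factorAt (f : ℕ → γ) (a m : ℕ) : List γ := (List.range m).map fun k => f (a + k)

@[simp] lemma length_factorAt (f : ℕ → γ) (a m : ℕ) : (factorAt f a m).length = m := by
  simp [factorAt]

@[simp] lemma getElem_factorAt (f : ℕ → γ) (a m k : ℕ) (hk : k < (factorAt f a m).length) :
    (factorAt f a m)[k] = f (a + k) := by
  simp [factorAt]

lemma factorAt_add (f : ℕ → γ) (a m k : ℕ) :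
    factorAt f a (m + k) = factorAt f a m ++ factorAt f (a + m) k := by
  simp only [factorAt, List.range_add, List.map_append, List.map_map]
  congr 1
  exact List.map_congr_left fun j _ => by simp [Nat.add_assoc]

lemma factorAt_eq_factorAt_iff {f g : ℕ → γ} {a b m : ℕ} :
    factorAt f a m = factorAt g b m ↔ ∀ j < m, f (a + j) = g (b + j) := by
  simp [factorAt, List.map_inj_left]

@[simp] lemma factorAt_shift (f : ℕ → γ) (a b m : ℕ) :
    factorAt (fun k => f (a + k)) b m = factorAt f (a + b) m :=
  factorAt_eq_factorAt_iff.2 fun j _ => by rw [Nat.add_assoc]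

lemma factorOf_factorAt (w : ℕ → γ) (a m : ℕ) : FactorOf (factorAt w a m) w :=
  ⟨a, by simp [factorAt]⟩

def PeriodicOn (f : ℕ → γ) (p len : ℕ) : Prop :=
  ∀ s, s + p < len → f (s + p) = f s

lemma PeriodicOn.mono {f : ℕ → γ} {p len len' : ℕ} (hf : PeriodicOn f p len)
    (hlen : len' ≤ len) : PeriodicOn f p len' :=
  fun s hs => hf s (by omega)

lemma PeriodicOn.shift {f : ℕ → γ} {p len : ℕ} (hf : PeriodicOn f p len) (d : ℕ) :
    PeriodicOn (fun s => f (d + s)) p (len - d) :=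
  fun s hs => by simpa only [Nat.add_assoc] using hf (d + s) (by omega)

lemma PeriodicOn.apply_add_mul {f : ℕ → γ} {p len : ℕ} (hf : PeriodicOn f p len) {s : ℕ} :
    ∀ k, s + k * p < len → f (s + k * p) = f s
  | 0, _ => by simp
  | k + 1, hk => by
    rw [Nat.succ_mul] at hk ⊢
    rw [← Nat.add_assoc, hf _ (by omega), hf.apply_add_mul k (by omega)]

lemma PeriodicOn.factorAt_eq_flatten_replicate {f : ℕ → γ} {n : ℕ} :
    ∀ k, PeriodicOn f n (k * n) → factorAt f 0 (k * n) = (List.replicate k (factorAt f 0 n)).flatten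
  | 0, _ => by simp [factorAt]
  | k + 1, hf => by
    rw [Nat.succ_mul, factorAt_add, List.replicate_succ', List.flatten_append,
      PeriodicOn.factorAt_eq_flatten_replicate k (hf.mono (by nlinarith)), List.flatten_singleton,
      Nat.zero_add]
    congr 1
    refine factorAt_eq_factorAt_iff.2 fun j hj => ?_
    rw [Nat.zero_add, Nat.add_comm, hf.apply_add_mul k (by nlinarith)]

lemma HasPeriod.periodicOn {f : ℕ → γ} {p len : ℕ} (hf : HasPeriod (factorAt f 0 len) p) :
    PeriodicOn f p len := fun s hs => by
  have := hf.2.2 s (by simpa using hs)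
  rw [List.getElem?_eq_getElem (by simpa using hs),
    List.getElem?_eq_getElem (by simp; omega)] at this
  simpa using this

def splice (f g : ℕ → γ) (m : ℕ) : ℕ → γ := fun s => if s < m then f s else g (s - m)

lemma splice_of_lt {f g : ℕ → γ} {m s : ℕ} (hs : s < m) : splice f g m s = f s := if_pos hs

lemma splice_add {f g : ℕ → γ} (m s : ℕ) : splice f g m (m + s) = g s := by
  simp [splice]

lemma splice_add_add {f g : ℕ → γ} (d m s : ℕ) :
    splice f g (d + m) (d + s) = splice (fun s => f (d + s)) g m s := by
  simp only [splice, Nat.add_lt_add_iff_left, Nat.add_sub_add_left]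

lemma factorAt_splice (f g : ℕ → γ) (m k : ℕ) :
    factorAt (splice f g m) 0 (m + k) = factorAt f 0 m ++ factorAt g 0 k := by
  rw [factorAt_add, Nat.zero_add]
  congr 1 <;> refine factorAt_eq_factorAt_iff.2 fun j hj => ?_
  · exact splice_of_lt (by omega)
  · simp [splice_add]

end Words

lemma not_periodicOn_splice_of_circularlyCubefree {α : Type*} {w : ℕ → α}
    (hccf : ∀ x₁ t x₂ z : List α, z ≠ [] → FactorOf (x₁ ++ t ++ x₂) w → x₂ ++ x₁ ≠ z ++ z ++ z)
    {s₁ s₂ m n : ℕ} (hn : 0 < n) (hgap : s₁ + 3 * n ≤ s₂ + m) :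
    ¬ PeriodicOn (splice (fun k => w (s₂ + k)) (fun k => w (s₁ + k)) m) n (3 * n) := by
  intro hper
  set z := factorAt (splice (fun k => w (s₂ + k)) (fun k => w (s₁ + k)) m) 0 n
  have hz : z ≠ [] := by simp [z, ← List.length_pos_iff, hn]
  have hcube := hper.factorAt_eq_flatten_replicate 3
  simp only [List.replicate, List.flatten_cons, List.flatten_nil, List.append_nil,
    ← List.append_assoc] at hcube
  rcases le_or_gt (3 * n) m with hm | hm
  · refine hccf [] [] (factorAt w s₂ (3 * n)) z hz
      (by simpa using factorOf_factorAt w s₂ (3 * n)) ?_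
    rw [List.append_nil, ← hcube, factorAt_eq_factorAt_iff]
    exact fun j hj => by rw [Nat.zero_add, splice_of_lt (by omega)]
  · obtain ⟨g, rfl⟩ : ∃ g, s₂ = s₁ + (3 * n - m) + g := ⟨s₂ - (s₁ + (3 * n - m)), by omega⟩
    refine hccf (factorAt w s₁ (3 * n - m)) (factorAt w (s₁ + (3 * n - m)) g)
      (factorAt w (s₁ + (3 * n - m) + g) m) z hz ?_ ?_
    · rw [← factorAt_add, Nat.add_assoc, ← factorAt_add]
      exact factorOf_factorAt _ _ _
    · rw [← hcube, show 3 * n = m + (3 * n - m) by omega, factorAt_splice]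
      simp

lemma exists_mul_mem_Ico {q : ℕ} (hq : 0 < q) (c : ℕ) : ∃ u, c ≤ u * q ∧ u * q < c + q := by
  refine ⟨(c + q - 1) / q, ?_, ?_⟩
  · have := Nat.lt_div_mul_add (a := c + q - 1) hq
    omega
  · have := Nat.div_mul_le_self (c + q - 1) q
    omega

lemma exists_aligned_decomposition {q : ℕ} (hq : 0 < q) {c d ℓ : ℕ} (hmod : c + ℓ ≡ d [MOD q])
    (hℓ : q ≤ ℓ) :
    ∃ δ j g m ρ, δ < q ∧ ρ < q ∧ c + δ = j * q ∧ d = g * q + ρ ∧ ℓ = δ + m * q + ρ := by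
  obtain ⟨j, hcj, hjc⟩ := exists_mul_mem_Ico hq c
  refine ⟨j * q - c, j, d / q, (ℓ - (j * q - c)) / q, d % q, by omega, Nat.mod_lt _ hq, by omega,
    (Nat.div_add_mod' d q).symm, ?_⟩
  have hrem : (ℓ - (j * q - c)) % q = d % q := by
    rw [← hmod, show c + ℓ = ℓ - (j * q - c) + j * q by omega, Nat.add_mul_mod_self_right]
  have := Nat.div_add_mod' (ℓ - (j * q - c)) q
  omega

lemma StronglySynchronizing.injective {α β : Type*} {h : α → List β}
    (hssm : StronglySynchronizing h) : Function.Injective h := fun a c hac => by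
  rcases hssm.2 a a c (h c) [] (by simp) (by rw [hac]) List.nil_suffix with hca | hca <;>
    exact hca.symm

section UniformMorphism

variable {α β : Type*} [Inhabited β] {h : α → List β} {q : ℕ}

lemma morphImage_mul_add (hq : 0 < q) (W : ℕ → α) (j s : ℕ) :
    morphImage h q W (j * q + s) = morphImage h q (fun k => W (j + k)) s := by
  simp only [morphImage, Nat.mul_comm j q, Nat.mul_add_div hq, Nat.mul_add_mod]

lemma factorAt_morphImage_mul (hq : 0 < q) (huni : ∀ a, (h a).length = q) (W : ℕ → α) (j : ℕ) :
    factorAt (morphImage h q W) (j * q) q = h (W j) := by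
  refine List.ext_getElem (by simp [huni]) fun r hr hr' => ?_
  rw [length_factorAt] at hr
  rw [getElem_factorAt, morphImage_mul_add hq, morphImage, Nat.div_eq_of_lt hr, Nat.mod_eq_of_lt hr,
    Nat.add_zero, List.getD_eq_getElem]

lemma morphImage_splice (hq : 0 < q) (V₁ V₂ : ℕ → α) (m : ℕ) :
    morphImage h q (splice V₁ V₂ m) = splice (morphImage h q V₁) (morphImage h q V₂) (m * q) := by
  funext s
  rcases lt_or_ge s (m * q) with hs | hs
  · have : s / q < m := (Nat.div_lt_iff_lt_mul hq).2 hs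
    simp [morphImage, splice, hs, this]
  · obtain ⟨s, rfl⟩ := Nat.exists_eq_add_of_le hs
    rw [morphImage_mul_add hq, splice_add]
    exact congrArg (morphImage h q · s) (funext fun k => splice_add m k)

lemma Synchronizing.dvd_of_factorAt_eq (hsync : Synchronizing h) (hq : 0 < q)
    (huni : ∀ a, (h a).length = q) (W : ℕ → α) {t : ℕ} {a : α}
    (ht : factorAt (morphImage h q W) t q = h a) : q ∣ t := by
  obtain ⟨k, d, hd, rfl⟩ : ∃ k d, d < q ∧ t = k * q + d :=
    ⟨t / q, t % q, Nat.mod_lt t hq, by rw [Nat.mul_comm, Nat.div_add_mod]⟩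
  have hsplit : h (W k) ++ h (W (k + 1)) =
      factorAt (morphImage h q W) (k * q) d ++ h a ++
        factorAt (morphImage h q W) (k * q + d + q) (q - d) := by
    rw [← factorAt_morphImage_mul hq huni, ← factorAt_morphImage_mul hq huni, ← ht, Nat.succ_mul,
      ← factorAt_add, ← factorAt_add, Nat.add_assoc, ← factorAt_add,
      show d + q + (q - d) = q + q by omega]
  rcases hsync _ _ _ _ _ hsplit with ⟨hr, -⟩ | ⟨hs, -⟩
  · have : d = 0 := by simpa using congrArg List.length hr
    exact ⟨k, by rw [this, Nat.add_zero, Nat.mul_comm]⟩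
  · have := congrArg List.length hs
    simp at this
    omega

lemma Synchronizing.dvd_of_periodicOn (hsync : Synchronizing h) (hq : 0 < q)
    (huni : ∀ a, (h a).length = q) {W : ℕ → α} {p : ℕ}
    (hper : PeriodicOn (morphImage h q W) p (p + q)) : q ∣ p := by
  refine hsync.dvd_of_factorAt_eq hq huni W (a := W 0) ?_
  rw [← factorAt_morphImage_mul hq huni W 0, Nat.zero_mul, factorAt_eq_factorAt_iff]
  intro j hj
  rw [Nat.zero_add, Nat.add_comm, hper j (by omega)]

lemma PeriodicOn.of_morphImage (hinj : Function.Injective h) (hq : 0 < q)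
    (huni : ∀ a, (h a).length = q) {W : ℕ → α} {n m : ℕ}
    (hper : PeriodicOn (morphImage h q W) (n * q) (m * q)) : PeriodicOn W n m := fun k hk => by
  refine hinj ?_
  rw [← factorAt_morphImage_mul hq huni, ← factorAt_morphImage_mul hq huni, Nat.add_mul,
    factorAt_eq_factorAt_iff]
  intro r hr
  have : (k + n + 1) * q ≤ m * q := Nat.mul_le_mul_right q hk
  rw [Nat.add_right_comm, hper _ (by rw [Nat.add_mul, Nat.add_mul] at this; omega)]

lemma exists_periodicOn_morphImage_shift (hq : 0 < q) {w : ℕ → α} {c p len : ℕ}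
    (hper : PeriodicOn (fun s => morphImage h q w (c + s)) p len) :
    ∃ u, PeriodicOn (morphImage h q fun k => w (u + k)) p (len - q) := by
  obtain ⟨u, hcu, huc⟩ := exists_mul_mem_Ico hq c
  have hu : (fun s => morphImage h q w (c + (u * q - c + s))) = morphImage h q fun k => w (u + k) :=
    funext fun s => by rw [← Nat.add_assoc, Nat.add_sub_cancel' hcu, morphImage_mul_add hq]
  exact ⟨u, hu ▸ (hper.shift (u * q - c)).mono (by omega)⟩

lemma length_lt_of_periodicOn_morphImage (hinj : Function.Injective h) (hq : 0 < q)
    (huni : ∀ a, (h a).length = q) {w : ℕ → α} (hsf : ∀ z : List α, z ≠ [] → ¬ FactorOf (z ++ z) w)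
    {c n len : ℕ} (hn : 0 < n) (hper : PeriodicOn (fun s => morphImage h q w (c + s)) (n * q) len) :
    len < 2 * (n * q) + q := by
  by_contra! hlen
  obtain ⟨u, hu⟩ := exists_periodicOn_morphImage_shift hq hper
  have hsq := (hu.mono (by rw [Nat.mul_assoc]; omega : 2 * n * q ≤ len - q)).of_morphImage
    hinj hq huni
  refine hsf (factorAt w u n) (by simp [← List.length_pos_iff, hn]) ⟨u, ?_⟩
  have := hsq.factorAt_eq_flatten_replicate 2
  simp only [factorAt_shift, Nat.add_zero, List.replicate, List.flatten_cons, List.flatten_nil,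
    List.append_nil] at this
  rw [← this]
  simp [factorAt]

lemma Synchronizing.modEq_of_periodicOn_splice (hsync : Synchronizing h) (hq : 0 < q)
    (huni : ∀ a, (h a).length = q) {w : ℕ → α} {c d ℓ₂ ℓ₁ p : ℕ}
    (hper : PeriodicOn (splice (fun s => morphImage h q w (c + s))
      (fun s => morphImage h q w (d + s)) ℓ₂) p (ℓ₂ + ℓ₁))
    (hqp : q ∣ p) (hp : 2 * q ≤ p) (hℓ₂ : 2 * q ≤ ℓ₂) (hℓ₁ : 2 * q ≤ ℓ₁)
    (hpℓ : p + 2 * q ≤ ℓ₂ + ℓ₁) : c + ℓ₂ ≡ d [MOD q] := by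
  obtain ⟨u, hlo, hhi⟩ := exists_mul_mem_Ico hq (c + (ℓ₂ - p))
  -- The image block `h (w u)` lies in the first piece and is sent by the period into the second.
  have hblock : factorAt (morphImage h q w) (d + (u * q - c + p - ℓ₂)) q = h (w u) := by
    rw [← factorAt_morphImage_mul hq huni, factorAt_eq_factorAt_iff]
    intro r hr
    have h₁ := hper (u * q - c + r) (by omega)
    rw [show u * q - c + r + p = ℓ₂ + (u * q - c + p - ℓ₂ + r) by omega, splice_add,
      splice_of_lt (by omega)] at h₁
    rw [Nat.add_assoc, h₁, ← Nat.add_assoc, Nat.add_sub_cancel' (by omega)]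
  have hX := Nat.modEq_zero_iff_dvd.2 (hsync.dvd_of_factorAt_eq hq huni w hblock)
  have hup : u * q + p ≡ 0 [MOD q] := Nat.modEq_zero_iff_dvd.2 (dvd_add (dvd_mul_left q u) hqp)
  calc c + ℓ₂ = 0 + (c + ℓ₂) := (Nat.zero_add _).symm
    _ ≡ d + (u * q - c + p - ℓ₂) + (c + ℓ₂) [MOD q] := hX.symm.add_right _
    _ = d + (u * q + p) := by omega
    _ ≡ d + 0 [MOD q] := hup.add_left d

lemma StronglySynchronizing.exists_splice_eq_morphImage (hssm : StronglySynchronizing h)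
    (hq : 0 < q) (huni : ∀ a, (h a).length = q) {W₂ W₁ : ℕ → α} {m ρ : ℕ} (hρ : ρ < q) {a : α}
    (ha : factorAt (splice (morphImage h q W₂) (fun s => morphImage h q W₁ (ρ + s)) (m * q + ρ))
      (m * q) q = h a) :
    ∃ e ≤ 1, splice (morphImage h q W₂) (fun s => morphImage h q W₁ (ρ + s)) (m * q + ρ) =
      morphImage h q (splice W₂ (fun k => W₁ (e + k)) (m + e)) := by
  set G := splice (morphImage h q W₂) (fun s => morphImage h q W₁ (ρ + s)) (m * q + ρ)
  have hpre : factorAt G (m * q) ρ <+: h (W₂ m) := by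
    refine ⟨factorAt (morphImage h q W₂) (m * q + ρ) (q - ρ), ?_⟩
    rw [show factorAt G (m * q) ρ = factorAt (morphImage h q W₂) (m * q) ρ from
        factorAt_eq_factorAt_iff.2 fun j _ => splice_of_lt (by omega),
      ← factorAt_add, Nat.add_sub_cancel' hρ.le, factorAt_morphImage_mul hq huni]
  have hsuf : factorAt G (m * q + ρ) (q - ρ) <:+ h (W₁ 0) := by
    refine ⟨factorAt (morphImage h q W₁) 0 ρ, ?_⟩
    rw [show factorAt G (m * q + ρ) (q - ρ) = factorAt (morphImage h q W₁) (0 + ρ) (q - ρ) from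
        factorAt_eq_factorAt_iff.2 fun j _ => by simp [G, splice_add],
      ← factorAt_add, Nat.add_sub_cancel' hρ.le]
    simpa using factorAt_morphImage_mul hq huni W₁ 0
  have hsplit : h a = factorAt G (m * q) ρ ++ factorAt G (m * q + ρ) (q - ρ) := by
    rw [← ha, ← factorAt_add, Nat.add_sub_cancel' hρ.le]
  have hlow : ∀ s < m * q, G s = morphImage h q W₂ s := fun s hs => splice_of_lt (by omega)
  have hhigh : ∀ t, ρ ≤ t → G (m * q + t) = morphImage h q W₁ t := fun t ht => by
    simp only [G, splice, if_neg (show ¬ m * q + t < m * q + ρ by omega)]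
    congr 1
    omega
  -- By strong synchronization the hybrid block `h a` is the image of one of its two neighbours.
  rcases hssm.2 _ _ a _ _ hsplit hpre hsuf with rfl | rfl
  · have hmid := factorAt_eq_factorAt_iff.1 (ha.trans (factorAt_morphImage_mul hq huni W₂ m).symm)
    refine ⟨1, le_rfl, funext fun s => ?_⟩
    rw [morphImage_splice hq, Nat.succ_mul]
    rcases lt_or_ge s (m * q) with hs | hs
    · rw [hlow s hs, splice_of_lt (by omega)]
    obtain ⟨t, rfl⟩ := Nat.exists_eq_add_of_le hs
    rcases lt_or_ge t q with ht | ht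
    · rw [hmid t ht, splice_of_lt (by omega)]
    obtain ⟨t, rfl⟩ := Nat.exists_eq_add_of_le ht
    rw [hhigh _ (by omega), ← Nat.add_assoc, splice_add]
    simpa using morphImage_mul_add hq W₁ 1 t
  · have hmid := factorAt_eq_factorAt_iff.1 (ha.trans (factorAt_morphImage_mul hq huni W₁ 0).symm)
    refine ⟨0, zero_le_one, funext fun s => ?_⟩
    simp only [Nat.zero_add, Nat.add_zero, morphImage_splice hq]
    rcases lt_or_ge s (m * q) with hs | hs
    · rw [hlow s hs, splice_of_lt hs]
    obtain ⟨t, rfl⟩ := Nat.exists_eq_add_of_le hs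
    rw [splice_add]
    rcases lt_or_ge t q with ht | ht
    · rw [hmid t ht, Nat.zero_mul, Nat.zero_add]
    · exact hhigh t (by omega)

lemma StronglySynchronizing.false_of_periodicOn_aligned_splice (hssm : StronglySynchronizing h)
    (hq : 0 < q) (huni : ∀ a, (h a).length = q) {w : ℕ → α}
    (hccf : ∀ x₁ t x₂ z : List α, z ≠ [] → FactorOf (x₁ ++ t ++ x₂) w → x₂ ++ x₁ ≠ z ++ z ++ z)
    {j g m ρ n ℓ : ℕ} (hρ : ρ < q) (hn : 0 < n)
    (hper : PeriodicOn (splice (morphImage h q fun k => w (j + k))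
      (fun s => morphImage h q (fun k => w (g + k)) (ρ + s)) (m * q + ρ)) (n * q) (m * q + ρ + ℓ))
    (hlen : 3 * (n * q) ≤ m * q + ρ + ℓ) (hℓ : q ≤ ρ + ℓ) (hpartner : n ≤ m ∨ n * q + q ≤ ρ + ℓ)
    (hgap : g + 3 * n ≤ j + m) : False := by
  set G := splice (morphImage h q fun k => w (j + k))
    (fun s => morphImage h q (fun k => w (g + k)) (ρ + s)) (m * q + ρ)
  -- The hybrid block `m` of `G` is a translate by the period of a genuine image block.
  have hblock : ∃ a, factorAt G (m * q) q = h a := by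
    have hqn : q ≤ n * q := Nat.le_mul_of_pos_left q hn
    rcases hpartner with hnm | hnq
    · have hmn : (m - n) * q + n * q = m * q := by rw [← Nat.add_mul, Nat.sub_add_cancel hnm]
      refine ⟨_, (factorAt_eq_factorAt_iff.2 fun r hr => ?_).trans
        (factorAt_morphImage_mul hq huni (fun k => w (j + k)) (m - n))⟩
      rw [← hmn, Nat.add_right_comm, hper _ (by omega)]
      exact splice_of_lt (by omega)
    · refine ⟨_, (factorAt_eq_factorAt_iff.2 fun r hr => ?_).trans
        (factorAt_morphImage_mul hq huni (fun k => w (g + k)) n)⟩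
      rw [← hper _ (by omega)]
      simp only [G, splice, if_neg (show ¬ m * q + r + n * q < m * q + ρ by omega)]
      congr 1
      omega
  obtain ⟨a, ha⟩ := hblock
  obtain ⟨e, -, hGV⟩ := hssm.exists_splice_eq_morphImage hq huni hρ ha
  rw [show G = _ from hGV] at hper
  have hV := (hper.mono (by rw [Nat.mul_assoc]; exact hlen : 3 * n * q ≤ _)).of_morphImage
    hssm.injective hq huni
  refine not_periodicOn_splice_of_circularlyCubefree hccf hn (s₁ := g + e) (s₂ := j) (m := m + e)
    (by omega) ?_
  simpa only [Nat.add_assoc] using hV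

lemma StronglySynchronizing.length_lt_of_periodicOn_splice (hssm : StronglySynchronizing h)
    (hq : 0 < q) (huni : ∀ a, (h a).length = q) {w : ℕ → α}
    (hsf : ∀ z : List α, z ≠ [] → ¬ FactorOf (z ++ z) w)
    (hccf : ∀ x₁ t x₂ z : List α, z ≠ [] → FactorOf (x₁ ++ t ++ x₂) w → x₂ ++ x₁ ≠ z ++ z ++ z)
    {c d ℓ₂ ℓ₁ p : ℕ} (hdc : d + ℓ₁ ≤ c) (hp : 0 < p) (h13 : 13 * p < 4 * (ℓ₂ + ℓ₁))
    (hper : PeriodicOn (splice (fun s => morphImage h q w (c + s))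
      (fun s => morphImage h q w (d + s)) ℓ₂) p (ℓ₂ + ℓ₁)) :
    ℓ₂ + ℓ₁ < 22 * q := by
  by_contra! hL
  have hper₂ : PeriodicOn (fun s => morphImage h q w (c + s)) p ℓ₂ := fun s hs => by
    simpa only [splice_of_lt hs, splice_of_lt (show s < ℓ₂ by omega)] using hper s (by omega)
  have hper₁ : PeriodicOn (fun s => morphImage h q w (d + s)) p ℓ₁ := by
    simpa only [splice_add, Nat.add_sub_cancel_left] using hper.shift ℓ₂
  obtain ⟨n, rfl⟩ : ∃ n, p = n * q := by
    refine exists_eq_mul_left_of_dvd ?_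
    rcases le_total ℓ₁ ℓ₂ with hℓ | hℓ
    · obtain ⟨u, hu⟩ := exists_periodicOn_morphImage_shift hq hper₂
      exact hssm.1.dvd_of_periodicOn hq huni (hu.mono (by omega))
    · obtain ⟨u, hu⟩ := exists_periodicOn_morphImage_shift hq hper₁
      exact hssm.1.dvd_of_periodicOn hq huni (hu.mono (by omega))
  have hn : 0 < n := Nat.pos_of_mul_pos_right hp
  have hqn : q ≤ n * q := Nat.le_mul_of_pos_left q hn
  have hsq₂ := length_lt_of_periodicOn_morphImage hssm.injective hq huni hsf hn hper₂
  have hsq₁ := length_lt_of_periodicOn_morphImage hssm.injective hq huni hsf hn hper₁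
  have hmod := hssm.1.modEq_of_periodicOn_splice hq huni hper (dvd_mul_left q n)
    (by omega) (by omega) (by omega) (by omega)
  obtain ⟨δ, j, g, m, ρ, hδ, hρ, hj, rfl, rfl⟩ := exists_aligned_decomposition hq hmod (by omega)
  refine hssm.false_of_periodicOn_aligned_splice hq huni hccf (j := j) (g := g) (m := m) (ℓ := ℓ₁)
    hρ hn ?_ (by omega) (by omega) ?_ ?_
  · have hrealign : (fun s => splice (fun s => morphImage h q w (c + s))
        (fun s => morphImage h q w (g * q + ρ + s)) (δ + m * q + ρ) (δ + s)) =
        splice (morphImage h q fun k => w (j + k))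
          (fun s => morphImage h q (fun k => w (g + k)) (ρ + s)) (m * q + ρ) := by
      funext s
      rw [Nat.add_assoc δ, splice_add_add]
      congr 1 <;> funext s
      · rw [← Nat.add_assoc, hj, morphImage_mul_add hq]
      · rw [Nat.add_assoc, morphImage_mul_add hq]
    exact hrealign ▸ (hper.shift δ).mono (by omega)
  · by_contra! hcon
    have : (m + 1) * q ≤ n * q := Nat.mul_le_mul_right q hcon.1
    rw [Nat.succ_mul] at this
    omega
  · have : (g + 3 * n) * q < (j + m + 1) * q := by
      rw [Nat.add_mul, Nat.add_mul, Nat.add_mul, Nat.mul_assoc]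
      omega
    have := Nat.lt_of_mul_lt_mul_right this
    omega

end UniformMorphism

/-- if `h` is a strongly synchronizing `q`-uniform morphism and `w` is
squarefree and circularly cubefree, then every circular `(13/4)⁺`-power of `h(w)` has
length less than `22q`. -/
theorem circular_powers_in_morphic_image {α β : Type*} [Inhabited β]
    (h : α → List β) (q : ℕ) (hq : 0 < q) (huni : ∀ a : α, (h a).length = q)
    (hssm : StronglySynchronizing h) (w : ℕ → α)
    (hsf : ∀ z : List α, z ≠ [] → ¬ FactorOf (z ++ z) w)
    (hccf : ∀ x₁ t x₂ z : List α, z ≠ [] → FactorOf (x₁ ++ t ++ x₂) w →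
      x₂ ++ x₁ ≠ z ++ z ++ z) :
    ∀ (x₁ t x₂ : List β) (β' : ℚ) (p : ℕ),
      FactorOf (x₁ ++ t ++ x₂) (morphImage h q w) → (13 : ℚ) / 4 < β' →
      HasPeriod (x₂ ++ x₁) p → ((x₂ ++ x₁).length : ℚ) = β' * p →
      (x₂ ++ x₁).length < 22 * q := by
  intro x₁ t x₂ β' p hfac hβ hper hlen
  obtain ⟨i, hi⟩ := hfac
  change _ = factorAt (morphImage h q w) i _ at hi
  rw [List.length_append, List.length_append, factorAt_add, factorAt_add] at hi
  obtain ⟨hx₁t, hx₂⟩ := List.append_inj' hi (by simp)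
  have hx₁ := (List.append_inj hx₁t (by simp)).1
  have hword : x₂ ++ x₁ = factorAt
      (splice (fun s => morphImage h q w (i + (x₁.length + t.length) + s))
        (fun s => morphImage h q w (i + s)) x₂.length) 0 (x₂.length + x₁.length) := by
    rw [factorAt_splice, factorAt_shift, factorAt_shift, Nat.add_zero, Nat.add_zero, ← hx₁, ← hx₂]
  have h13 : 13 * p < 4 * (x₂.length + x₁.length) := by
    have hp : (0 : ℚ) < p := by exact_mod_cast hper.1
    have : (13 : ℚ) * p < 4 * ((x₂.length + x₁.length : ℕ) : ℚ) := by
      rw [← List.length_append, hlen]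
      nlinarith
    exact_mod_cast this
  rw [List.length_append]
  rw [hword] at hper
  exact hssm.length_lt_of_periodicOn_splice hq huni hsf hccf (by omega) hper.1 h13 hper.periodicOn
end
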